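/- arXiv:1103.0975 — 3 statements merged into one kernel-verified Lean document; each statement's English description precedes it below -/
import Mathlib

section
/- The functions P and P* are Legendre conjugates: for every y ∈ ℝ, P*(y) = sup over x ∈ ℝ of (xy - P(x)), where P(t) = e^{|t|} - 1 - |t| and P*(t) = (|t|+1)ln(|t|+1) - |t|. -/
noncomputable section

/-- `P(t) = e^{|t|} - 1 - |t|`. -/
def P (t : ℝ) : ℝ := Real.exp |t| - 1 - |t|

/-- `P*(t) = (|t|+1) ln(|t|+1) - |t|`. -/
def Pstar (t : ℝ) : ℝ := (|t| + 1) * Real.log (|t| + 1) - |t|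

/-- `P*` is the Legendre conjugate of `P`: for every `y`,
`P*(y)` is the supremum over `x` of `x y - P(x)`. -/
theorem Pstar_eq_legendre_conjugate (y : ℝ) :
    IsLUB (Set.range fun x : ℝ => x * y - P x) (Pstar y) := by
  have hw : (0:ℝ) < |y| + 1 := by positivity
  have hlog : 0 ≤ Real.log (|y| + 1) := Real.log_nonneg (by linarith [abs_nonneg y])
  apply IsGreatest.isLUB
  constructor
  · set x0 : ℝ := if 0 ≤ y then Real.log (|y| + 1) else -Real.log (|y| + 1) with hx0
    refine ⟨x0, ?_⟩
    have habs : |x0| = Real.log (|y| + 1) := by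
      rcases le_or_gt 0 y with h | h
      · simp [hx0, h, abs_of_nonneg hlog]
      · simp [hx0, not_le.mpr h, abs_of_nonpos (neg_nonpos.mpr hlog)]
    have hxy : x0 * y = Real.log (|y| + 1) * |y| := by
      rcases le_or_gt 0 y with h | h
      · simp [hx0, h, abs_of_nonneg h]
      · simp only [hx0, if_neg (not_le.mpr h), abs_of_neg h]; ring
    have hexp : Real.exp |x0| = |y| + 1 := by
      rw [habs, Real.exp_log hw]
    simp only [P, Pstar, hxy, hexp, habs]
    rw [Real.exp_log (by positivity)]
    ring
  · rintro _ ⟨x, rfl⟩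
    simp only [P, Pstar]
    have h1 : x * y ≤ |x| * |y| := le_trans (le_abs_self _) (le_of_eq (abs_mul x y))
    have h2 : (|y|+1) * (1 + (|x| - Real.log (|y|+1))) ≤ Real.exp |x| := by
      calc (|y|+1) * (1 + (|x| - Real.log (|y|+1)))
          ≤ (|y|+1) * Real.exp (|x| - Real.log (|y|+1)) := by
            have ht := Real.add_one_le_exp (|x| - Real.log (|y|+1))
            exact mul_le_mul_of_nonneg_left (by linarith) hw.le
        _ = Real.exp |x| := by
            rw [Real.exp_sub, Real.exp_log hw]; field_simp
    nlinarith [abs_nonneg x, abs_nonneg y]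
end
end

section
/- For every real number r and every real u ≥ 0, u·r ≤ (1/2)(e^u - 1 - u) + Q(r), where Q(r) = (|r| + 1/2)ln(2|r| + 1) - |r|. -/
/-!
`Q` is the Legendre transform of the convex function `f u = (1/2)(e^u - 1 - u)` evaluated at `|r|`:
the slope of `f` equals `|r|` at `u = log (2|r| + 1)`, and the tangent line there is
`u ↦ u|r| - Q r`. Convexity of `exp` puts `f` above this line, and `u r ≤ u |r|` for `u ≥ 0`.
-/

noncomputable section

def Q (r : ℝ) : ℝ := (|r| + 1 / 2) * Real.log (2 * |r| + 1) - |r|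

open Real

theorem Real.mul_sub_log_add_one_le_exp {a : ℝ} (ha : 0 < a) (u : ℝ) :
    a * (u - log a + 1) ≤ exp u :=
  calc a * (u - log a + 1) ≤ a * exp (u - log a) := by gcongr; exact add_one_le_exp _
    _ = exp u := by rw [exp_sub, exp_log ha]; field_simp

theorem mul_abs_le_half_exp_sub_one_sub_add_Q (r u : ℝ) :
    u * |r| ≤ (1 / 2) * (exp u - 1 - u) + Q r := by
  have tangent := mul_sub_log_add_one_le_exp (by positivity : 0 < 2 * |r| + 1) u
  unfold Q
  linear_combination (1 / 2) * tangent

/-- Weighted Young-type inequality: `u r ≤ (1/2)(e^u - 1 - u) + Q(r)` for `u ≥ 0`. -/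
theorem young_type_inequality_Q (r u : ℝ) (hu : 0 ≤ u) :
    u * r ≤ (1 / 2) * (Real.exp u - 1 - u) + Q r :=
  (mul_le_mul_of_nonneg_left (le_abs_self r) hu).trans
    (mul_abs_le_half_exp_sub_one_sub_add_Q r u)
end
end

section
/- Let Ω ⊂ ℝ^N be a bounded smooth domain and u a positive solution of -Δu + e^u - 1 = 0 in Ω. Then there exists a constant D (independent of u) such that u(x) ≤ 2 ln(1/ρ(x)) + D for all x ∈ Ω, where ρ(x) = dist(x, ∂Ω). -/
/-!
Comparison with an explicit large solution on balls. On `B(x₀, r)` the function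
`v = log ((4N + 8 + r²) r²) - 2 log (r² - |x - x₀|²)` satisfies `Δv < e^v - 1` and tends to `+∞`
at the boundary sphere. At an interior minimum of `v - u` the Laplacian of `v - u` is nonnegative,
so there `e^u - 1 ≤ Δu ≤ Δv < e^v - 1`, i.e. `u < v`; hence the minimum of `v - u` is positive and
`u(x₀) < v(x₀)`, which reads `r² (e^{u(x₀)} - 1) < 4N + 8`. Every ball of radius `r < ρ(x₀)` lies in
`Ω`, so letting `r → ρ(x₀)` and using `ρ(x₀) ≤ diam Ω` gives the estimate with
`D = log (4N + 8 + (diam Ω)²)`.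
-/

open MeasureTheory Metric

noncomputable section

def laplacian {N : ℕ} (f : EuclideanSpace ℝ (Fin N) → ℝ)
    (x : EuclideanSpace ℝ (Fin N)) : ℝ :=
  ∑ i : Fin N, iteratedFDeriv ℝ 2 f x (fun _ => EuclideanSpace.single i (1 : ℝ))

open Real Set Filter Topology

theorem IsLocalMin.deriv_deriv_nonneg {f : ℝ → ℝ} {a : ℝ} (h : IsLocalMin f a)
    (hf : ContinuousAt f a) : 0 ≤ deriv (deriv f) a := by
  by_contra! hneg
  -- a local minimum that is also a local maximum is a point where `f` is locally constant
  have hconst : f =ᶠ[𝓝 a] fun _ => f a :=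
    (h.and (isLocalMax_of_deriv_deriv_neg hneg h.deriv_eq_zero hf)).mono
      fun x hx => le_antisymm hx.2 hx.1
  have : deriv f =ᶠ[𝓝 a] fun _ => 0 := by
    filter_upwards [hconst.eventuallyEq_nhds] with x hx
    rw [hx.deriv_eq, deriv_const]
  rw [this.deriv_eq, deriv_const] at hneg
  exact lt_irrefl _ hneg

section Slices

variable {E F : Type*} [NormedAddCommGroup E] [NormedSpace ℝ E]
  [NormedAddCommGroup F] [NormedSpace ℝ F]

theorem hasDerivAt_add_smul (x e : E) (t : ℝ) : HasDerivAt (fun s : ℝ => x + s • e) e t := by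
  simpa using ((hasDerivAt_id t).smul_const e).const_add x

theorem iteratedFDeriv_two_apply_const_eq_deriv_deriv {f : E → F} {x : E}
    (hf : ContDiffAt ℝ 2 f x) (e : E) :
    iteratedFDeriv ℝ 2 f x (fun _ => e) = deriv (deriv fun t : ℝ => f (x + t • e)) 0 := by
  have hline : Tendsto (fun t : ℝ => x + t • e) (𝓝 0) (𝓝 x) := by
    simpa using (hasDerivAt_add_smul x e 0).continuousAt.tendsto
  have hderiv : deriv (fun t : ℝ => f (x + t • e)) =ᶠ[𝓝 0] fun t => fderiv ℝ f (x + t • e) e := by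
    filter_upwards [hline.eventually (hf.eventually (by simp))] with t ht
    exact ((ht.differentiableAt two_ne_zero).hasFDerivAt.comp_hasDerivAt t
      (hasDerivAt_add_smul x e t)).deriv
  have hf' : DifferentiableAt ℝ (fderiv ℝ f) x :=
    (hf.fderiv_right (m := 1) le_rfl).differentiableAt one_ne_zero
  have h2 : HasDerivAt (fun t : ℝ => fderiv ℝ f (x + t • e) e) (fderiv ℝ (fderiv ℝ f) x e e) 0 :=
    ((ContinuousLinearMap.apply ℝ F e).hasFDerivAt.comp x hf'.hasFDerivAt).comp_hasDerivAt_of_eq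
      0 (hasDerivAt_add_smul x e 0) (by simp)
  rw [iteratedFDeriv_two_apply, hderiv.deriv_eq, h2.deriv]

theorem IsLocalMin.iteratedFDeriv_two_apply_const_nonneg {f : E → ℝ} {x : E}
    (hmin : IsLocalMin f x) (hf : ContDiffAt ℝ 2 f x) (e : E) :
    0 ≤ iteratedFDeriv ℝ 2 f x (fun _ => e) := by
  have hline := (hasDerivAt_add_smul x e 0).continuousAt
  rw [iteratedFDeriv_two_apply_const_eq_deriv_deriv hf]
  exact IsLocalMin.deriv_deriv_nonneg (IsLocalMin.comp_continuous (by simpa using hmin) hline)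
    (hf.continuousAt.comp_of_eq hline (by simp))

end Slices

section Laplacian

variable {N : ℕ}

theorem laplacian_nonneg_of_isLocalMin {f : EuclideanSpace ℝ (Fin N) → ℝ}
    {x : EuclideanSpace ℝ (Fin N)} (hf : ContDiffAt ℝ 2 f x) (hmin : IsLocalMin f x) :
    0 ≤ laplacian f x :=
  Finset.sum_nonneg fun _ _ => hmin.iteratedFDeriv_two_apply_const_nonneg hf _

theorem laplacian_sub {f g : EuclideanSpace ℝ (Fin N) → ℝ} {x : EuclideanSpace ℝ (Fin N)}
    (hf : ContDiffAt ℝ 2 f x) (hg : ContDiffAt ℝ 2 g x) :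
    laplacian (f - g) x = laplacian f x - laplacian g x := by
  simp [laplacian, iteratedFDeriv_sub_apply hf hg, Finset.sum_sub_distrib]

theorem lt_of_isLocalMin_sub {f : ℝ → ℝ} (hf : Monotone f) {u v : EuclideanSpace ℝ (Fin N) → ℝ}
    {y : EuclideanSpace ℝ (Fin N)} (hu : ContDiffAt ℝ 2 u y) (hv : ContDiffAt ℝ 2 v y)
    (hmin : IsLocalMin (v - u) y) (hsub : f (u y) ≤ laplacian u y)
    (hsuper : laplacian v y < f (v y)) : u y < v y := by
  have hle : laplacian u y ≤ laplacian v y := by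
    have := laplacian_nonneg_of_isLocalMin (f := v - u) (hv.sub hu) hmin
    rw [laplacian_sub hv hu] at this
    linarith
  by_contra! h
  linarith [hf h]

theorem apply_lt_of_forall_sphere_lt {f : ℝ → ℝ} (hf : Monotone f)
    {u v : EuclideanSpace ℝ (Fin N) → ℝ} {x₀ : EuclideanSpace ℝ (Fin N)} {r : ℝ}
    (hu_cont : ContinuousOn u (closedBall x₀ r)) (hu : ContDiffOn ℝ 2 u (ball x₀ r))
    (hv : ContDiffOn ℝ 2 v (ball x₀ r)) (hsub : ∀ y ∈ ball x₀ r, f (u y) ≤ laplacian u y)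
    (hsuper : ∀ y ∈ ball x₀ r, laplacian v y < f (v y))
    (hblow : ∀ M, ∃ s ∈ Ioo 0 r, ∀ y ∈ sphere x₀ s, M < v y) : u x₀ < v x₀ := by
  obtain ⟨M, hM⟩ := (isCompact_closedBall x₀ r).bddAbove_image hu_cont
  obtain ⟨s, ⟨hs, hsr⟩, hv_sphere⟩ := hblow (v x₀ - u x₀ + M)
  have hs_ball : closedBall x₀ s ⊆ ball x₀ r := closedBall_subset_ball hsr
  have hx₀ : x₀ ∈ closedBall x₀ s := mem_closedBall_self hs.le
  obtain ⟨y, hy, hmin⟩ := (isCompact_closedBall x₀ s).exists_isMinOn ⟨x₀, hx₀⟩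
    ((hv.continuousOn.sub hu.continuousOn).mono hs_ball)
  have hmin_x₀ : v y - u y ≤ v x₀ - u x₀ := hmin hx₀
  -- on the sphere `v - u` exceeds its value at the centre, so the minimum is interior
  have hy_int : y ∈ ball x₀ s := by
    refine (mem_closedBall.1 hy).lt_of_ne fun hys => ?_
    have huM : u y ≤ M := hM (mem_image_of_mem u (ball_subset_closedBall (hs_ball hy)))
    linarith [hv_sphere y hys]
  have hyr := hs_ball hy
  have hlt := lt_of_isLocalMin_sub hf (hu.contDiffAt (isOpen_ball.mem_nhds hyr))
    (hv.contDiffAt (isOpen_ball.mem_nhds hyr))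
    (hmin.isLocalMin (mem_of_superset (isOpen_ball.mem_nhds hy_int) ball_subset_closedBall))
    (hsub y hyr) (hsuper y hyr)
  linarith

end Laplacian

theorem deriv_deriv_const_sub_two_mul_log_quadratic (c A b : ℝ) (hA : 0 < A) :
    deriv (deriv fun t => c - 2 * log (A - 2 * b * t - t ^ 2)) 0 = (4 * A + 8 * b ^ 2) / A ^ 2 := by
  have hq : ∀ t, HasDerivAt (fun t => A - 2 * b * t - t ^ 2) (-2 * b - 2 * t) t := fun t =>
    ((((hasDerivAt_id t).const_mul (2 * b)).const_sub A).sub (hasDerivAt_pow 2 t)).congr_deriv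
      (by simp)
  have hq_pos : ∀ᶠ t in 𝓝 0, 0 < A - 2 * b * t - t ^ 2 :=
    continuousAt_const.eventually_lt (hq 0).continuousAt (by simpa using hA)
  have hderiv : deriv (fun t => c - 2 * log (A - 2 * b * t - t ^ 2))
      =ᶠ[𝓝 0] fun t => (4 * b + 4 * t) / (A - 2 * b * t - t ^ 2) := by
    filter_upwards [hq_pos] with t ht
    rw [((((hq t).log ht.ne').const_mul 2).const_sub c).deriv]
    ring
  have h2 : HasDerivAt (fun t => (4 * b + 4 * t) / (A - 2 * b * t - t ^ 2))
      ((4 * A + 8 * b ^ 2) / A ^ 2) 0 :=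
    ((((hasDerivAt_id (0 : ℝ)).const_mul 4).const_add (4 * b)).div (hq 0)
      (by simpa using hA.ne')).congr_deriv (by simp; ring)
  rw [hderiv.deriv_eq, h2.deriv]

section Barrier

variable {E : Type*} [NormedAddCommGroup E]

def ballBarrier (x₀ : E) (r c : ℝ) (y : E) : ℝ :=
  c - 2 * log (r ^ 2 - ‖y - x₀‖ ^ 2)

theorem sq_sub_norm_sub_sq_pos {x₀ y : E} {r : ℝ} (hy : y ∈ ball x₀ r) :
    0 < r ^ 2 - ‖y - x₀‖ ^ 2 := by
  rw [mem_ball, dist_eq_norm] at hy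
  nlinarith [norm_nonneg (y - x₀)]

theorem exists_lt_ballBarrier_sphere (x₀ : E) {r : ℝ} (c : ℝ) (hr : 0 < r) (M : ℝ) :
    ∃ s ∈ Ioo 0 r, ∀ y ∈ sphere x₀ s, M < ballBarrier x₀ r c y := by
  have hgap : Tendsto (fun s => r ^ 2 - s ^ 2) (𝓝[<] r) (𝓝[>] 0) := by
    refine tendsto_nhdsWithin_iff.2 ⟨?_, ?_⟩
    · have : Continuous fun s : ℝ => r ^ 2 - s ^ 2 := by fun_prop
      simpa using (this.tendsto r).mono_left nhdsWithin_le_nhds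
    · filter_upwards [Ioo_mem_nhdsLT hr] with s hs
      exact sub_pos.2 (pow_lt_pow_left₀ hs.2 hs.1.le two_ne_zero)
  have hblow : Tendsto (fun s => c - 2 * log (r ^ 2 - s ^ 2)) (𝓝[<] r) atTop := by
    simp_rw [sub_eq_add_neg c, ← neg_mul]
    exact tendsto_atTop_add_const_left _ c
      ((tendsto_log_nhdsGT_zero.comp hgap).const_mul_atBot_of_neg (by norm_num))
  obtain ⟨s, hM, hs⟩ := ((hblow.eventually_gt_atTop M).and (Ioo_mem_nhdsLT hr)).exists
  refine ⟨s, hs, fun y hy => ?_⟩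
  rwa [ballBarrier, ← dist_eq_norm, mem_sphere.1 hy]

theorem contDiffAt_ballBarrier [InnerProductSpace ℝ E] {x₀ y : E} {r : ℝ} (c : ℝ)
    (hy : y ∈ ball x₀ r) : ContDiffAt ℝ 2 (ballBarrier x₀ r c) y := by
  have hgap : ContDiff ℝ 2 fun w : E => r ^ 2 - ‖w - x₀‖ ^ 2 :=
    contDiff_const.sub ((contDiff_norm_sq ℝ).comp (contDiff_id.sub contDiff_const))
  have hlog : ContDiffAt ℝ 2 (fun w => log (r ^ 2 - ‖w - x₀‖ ^ 2)) y :=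
    ContDiffAt.comp (g := log) y (contDiffAt_log.2 (sq_sub_norm_sub_sq_pos hy).ne') hgap.contDiffAt
  exact contDiffAt_const.sub (contDiffAt_const.mul hlog)

theorem exp_ballBarrier {x₀ y : E} {r : ℝ} (c : ℝ) (hy : y ∈ ball x₀ r) :
    exp (ballBarrier x₀ r c y) = exp c / (r ^ 2 - ‖y - x₀‖ ^ 2) ^ 2 := by
  rw [ballBarrier, exp_sub, show (2 : ℝ) = (2 : ℕ) by norm_num, ← log_pow,
    exp_log (pow_pos (sq_sub_norm_sub_sq_pos hy) 2)]

end Barrier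

section BarrierLaplacian

variable {N : ℕ}

theorem ballBarrier_add_smul_single (x₀ y : EuclideanSpace ℝ (Fin N)) (r c : ℝ) (i : Fin N)
    (t : ℝ) : ballBarrier x₀ r c (y + t • EuclideanSpace.single i 1) =
      c - 2 * log ((r ^ 2 - ‖y - x₀‖ ^ 2) - 2 * (y - x₀) i * t - t ^ 2) := by
  have hshift : y + t • EuclideanSpace.single i (1 : ℝ) - x₀
      = (y - x₀) + t • EuclideanSpace.single i 1 := by abel
  rw [ballBarrier, hshift, norm_add_sq_real, real_inner_smul_right,
    EuclideanSpace.inner_single_right, norm_smul]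
  simp only [PiLp.norm_single, norm_one, mul_one, Real.norm_eq_abs, sq_abs,
    starRingEnd_apply, star_trivial]
  ring_nf

theorem laplacian_ballBarrier {x₀ y : EuclideanSpace ℝ (Fin N)} {r : ℝ} (c : ℝ)
    (hy : y ∈ ball x₀ r) :
    laplacian (ballBarrier x₀ r c) y =
      (4 * N * (r ^ 2 - ‖y - x₀‖ ^ 2) + 8 * ‖y - x₀‖ ^ 2) / (r ^ 2 - ‖y - x₀‖ ^ 2) ^ 2 := by
  have hA := sq_sub_norm_sub_sq_pos hy
  have hslice : ∀ i : Fin N, iteratedFDeriv ℝ 2 (ballBarrier x₀ r c) y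
      (fun _ => EuclideanSpace.single i 1) =
        (4 * (r ^ 2 - ‖y - x₀‖ ^ 2) + 8 * (y - x₀) i ^ 2) / (r ^ 2 - ‖y - x₀‖ ^ 2) ^ 2 := by
    intro i
    rw [iteratedFDeriv_two_apply_const_eq_deriv_deriv (contDiffAt_ballBarrier c hy)]
    simp only [ballBarrier_add_smul_single]
    exact deriv_deriv_const_sub_two_mul_log_quadratic c _ _ hA
  rw [laplacian, Finset.sum_congr rfl fun i _ => hslice i, ← Finset.sum_div,
    Finset.sum_add_distrib, Finset.sum_const, ← Finset.mul_sum, EuclideanSpace.norm_sq_eq (y - x₀)]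
  simp only [Finset.card_univ, Fintype.card_fin, nsmul_eq_mul, Real.norm_eq_abs, sq_abs]
  ring

theorem laplacian_ballBarrier_lt_exp_sub_one {x₀ y : EuclideanSpace ℝ (Fin N)} {r : ℝ}
    (hy : y ∈ ball x₀ r) :
    laplacian (ballBarrier x₀ r (log ((4 * N + 8 + r ^ 2) * r ^ 2))) y <
      exp (ballBarrier x₀ r (log ((4 * N + 8 + r ^ 2) * r ^ 2)) y) - 1 := by
  have hA := sq_sub_norm_sub_sq_pos hy
  have hz : ‖y - x₀‖ < r := by rwa [mem_ball, dist_eq_norm] at hy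
  have hr : 0 < r := (norm_nonneg _).trans_lt hz
  -- with `A = r² - ‖y - x₀‖² ∈ (0, r²]` this reads `4NA + 8‖y - x₀‖² + A² < (4N + 8 + r²) r²`
  rw [laplacian_ballBarrier _ hy, exp_ballBarrier _ hy, exp_log (by positivity),
    lt_sub_iff_add_lt, div_add_one (by positivity), div_lt_div_iff_of_pos_right (by positivity)]
  have hN : (0 : ℝ) ≤ N := N.cast_nonneg
  nlinarith [norm_nonneg (y - x₀), mul_nonneg hN (sq_nonneg ‖y - x₀‖),
    mul_le_mul_of_nonneg_left (by nlinarith : r ^ 2 - ‖y - x₀‖ ^ 2 ≤ r ^ 2) hA.le]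

end BarrierLaplacian

theorem sq_mul_exp_sub_one_lt {N : ℕ} {u : EuclideanSpace ℝ (Fin N) → ℝ}
    {x₀ : EuclideanSpace ℝ (Fin N)} {r : ℝ} (hr : 0 < r)
    (hu_cont : ContinuousOn u (closedBall x₀ r)) (hu : ContDiffOn ℝ 2 u (ball x₀ r))
    (hlap : ∀ y ∈ ball x₀ r, laplacian u y = exp (u y) - 1) :
    r ^ 2 * (exp (u x₀) - 1) < 4 * N + 8 := by
  set c := log ((4 * N + 8 + r ^ 2) * r ^ 2)
  have hlt : u x₀ < ballBarrier x₀ r c x₀ :=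
    apply_lt_of_forall_sphere_lt (f := fun t => exp t - 1)
      (fun _ _ hab => by simpa using exp_le_exp.2 hab) hu_cont hu
      (fun y hy => (contDiffAt_ballBarrier c hy).contDiffWithinAt) (fun y hy => (hlap y hy).ge)
      (fun _ hy => laplacian_ballBarrier_lt_exp_sub_one hy) (exists_lt_ballBarrier_sphere x₀ c hr)
  have hexp := exp_lt_exp.2 hlt
  rw [exp_ballBarrier c (mem_ball_self hr), sub_self, norm_zero, zero_pow two_ne_zero, sub_zero,
    exp_log (by positivity), lt_div_iff₀ (by positivity)] at hexp
  have hr2 : 0 < r ^ 2 := by positivity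
  nlinarith

theorem nonpos_of_forall_sq_mul_lt {a b : ℝ} (h : ∀ r > 0, r ^ 2 * a < b) : a ≤ 0 := by
  by_contra! ha
  have hb : 0 < b := by simpa using (mul_pos one_pos ha).trans (by simpa using h 1 one_pos)
  have := h (sqrt (b / a)) (sqrt_pos.2 (div_pos hb ha))
  rw [sq_sqrt (div_pos hb ha).le, div_mul_cancel₀ _ ha.ne'] at this
  exact this.false

theorem sq_mul_le_of_forall_lt {ρ a b : ℝ} (hρ : 0 < ρ) (h : ∀ r ∈ Ioo 0 ρ, r ^ 2 * a < b) :
    ρ ^ 2 * a ≤ b := by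
  have hcont : Continuous fun r : ℝ => r ^ 2 * a := by fun_prop
  refine le_of_tendsto ((hcont.tendsto ρ).mono_left (nhdsWithin_le_nhds (s := Iio ρ))) ?_
  filter_upwards [Ioo_mem_nhdsLT hρ] with r hr using (h r hr).le

theorem le_two_mul_log_one_div_add_log {a ρ d B : ℝ} (hρ : 0 < ρ) (hρd : ρ ≤ d)
    (h : ρ ^ 2 * (exp a - 1) ≤ B) : a ≤ 2 * log (1 / ρ) + log (B + d ^ 2) := by
  have hd2 : ρ ^ 2 ≤ d ^ 2 := pow_le_pow_left₀ hρ.le hρd 2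
  have hBd : 0 < B + d ^ 2 := by nlinarith [mul_pos (pow_pos hρ 2) (exp_pos a)]
  have hexp : exp a ≤ (B + d ^ 2) / ρ ^ 2 := by
    rw [le_div_iff₀ (by positivity)]
    nlinarith
  calc a ≤ log ((B + d ^ 2) / ρ ^ 2) := by
        rw [← log_exp a]; exact log_le_log (exp_pos _) hexp
    _ = 2 * log (1 / ρ) + log (B + d ^ 2) := by
        rw [log_div hBd.ne' (by positivity), log_pow, one_div, log_inv]; push_cast; ring

theorem ball_infDist_frontier_subset {E : Type*} [NormedAddCommGroup E] [NormedSpace ℝ E]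
    {Ω : Set E} {x : E} (hΩ : IsOpen Ω) (hx : x ∈ Ω) : ball x (infDist x (frontier Ω)) ⊆ Ω := by
  rcases le_or_gt (infDist x (frontier Ω)) 0 with h | h
  · simp [ball_eq_empty.2 h]
  refine (convex_ball x _).isPreconnected.subset_of_closure_inter_subset hΩ
    ⟨x, mem_ball_self h, hx⟩ fun y ⟨hy_closure, hy_ball⟩ => ?_
  by_contra hyΩ
  have hy_frontier : y ∈ frontier Ω := by rw [hΩ.frontier_eq]; exact ⟨hy_closure, hyΩ⟩
  exact (infDist_le_dist_of_mem hy_frontier).not_gt (by rwa [mem_ball, dist_comm] at hy_ball)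

theorem keller_osserman_general {N : ℕ} (Ω : Set (EuclideanSpace ℝ (Fin N)))
    (hΩo : IsOpen Ω) (hΩb : Bornology.IsBounded Ω) :
    ∃ D : ℝ, ∀ u : EuclideanSpace ℝ (Fin N) → ℝ,
      ContDiffOn ℝ 2 u Ω → (∀ x ∈ Ω, 0 < u x) →
      (∀ x ∈ Ω, laplacian u x = Real.exp (u x) - 1) →
      ∀ x ∈ Ω, u x ≤ 2 * Real.log (1 / infDist x (frontier Ω)) + D := by
  refine ⟨log (4 * N + 8 + diam Ω ^ 2), fun u hu _ hlap x hx => ?_⟩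
  have hlocal : ∀ r > 0, closedBall x r ⊆ Ω → r ^ 2 * (exp (u x) - 1) < 4 * N + 8 :=
    fun r hr hr_sub => sq_mul_exp_sub_one_lt hr (hu.continuousOn.mono hr_sub)
      (hu.mono (ball_subset_closedBall.trans hr_sub))
      fun y hy => hlap y (hr_sub (ball_subset_closedBall hy))
  rcases (frontier Ω).eq_empty_or_nonempty with hfr | hfr
  · -- `Ω` is the whole space (only possible for `N = 0`) and `infDist x ∅ = 0`
    have hΩ : Ω = univ := (isClopen_iff_frontier_eq_empty.2 hfr).eq_univ ⟨x, hx⟩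
    have hux : u x ≤ 0 := by
      simpa using nonpos_of_forall_sq_mul_lt fun r hr => hlocal r hr (hΩ ▸ subset_univ _)
    rw [hfr, infDist_empty, div_zero, log_zero, mul_zero, zero_add]
    exact hux.trans (log_nonneg (by nlinarith [sq_nonneg (diam Ω), (N.cast_nonneg : (0 : ℝ) ≤ N)]))
  set ρ := infDist x (frontier Ω)
  have hρ : 0 < ρ :=
    (isClosed_frontier.notMem_iff_infDist_pos hfr).1 fun h => (hΩo.frontier_eq ▸ h).2 hx
  have hρ_diam : ρ ≤ diam Ω := by
    obtain ⟨z, hz⟩ := hfr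
    exact (infDist_le_dist_of_mem hz).trans (diam_closure Ω ▸
      dist_le_diam_of_mem hΩb.closure (subset_closure hx) (frontier_subset_closure hz))
  have hρ_bound : ρ ^ 2 * (exp (u x) - 1) ≤ 4 * N + 8 := sq_mul_le_of_forall_lt hρ fun r hr =>
    hlocal r hr.1 ((closedBall_subset_ball hr.2).trans (ball_infDist_frontier_subset hΩo hx))
  exact le_two_mul_log_one_div_add_log hρ hρ_diam hρ_bound

/-- Keller–Osserman estimate: there is a constant `D` (independent of `u`) such that
any positive `C²` solution of `-Δu + e^u - 1 = 0` in a bounded domain `Ω` satisfies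
`u(x) ≤ 2 ln(1/ρ(x)) + D`, with `ρ(x) = dist(x, ∂Ω)`. -/
theorem keller_osserman {N : ℕ} (Ω : Set (EuclideanSpace ℝ (Fin N)))
    (hΩo : IsOpen Ω) (hΩb : Bornology.IsBounded Ω) (hΩne : Ω.Nonempty) :
    ∃ D : ℝ, ∀ u : EuclideanSpace ℝ (Fin N) → ℝ,
      ContDiffOn ℝ 2 u Ω → (∀ x ∈ Ω, 0 < u x) →
      (∀ x ∈ Ω, laplacian u x = Real.exp (u x) - 1) →
      ∀ x ∈ Ω, u x ≤ 2 * Real.log (1 / infDist x (frontier Ω)) + D :=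
  keller_osserman_general Ω hΩo hΩb
end
end
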